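/- arXiv:1402.0818 — 8 statements merged into one kernel-verified Lean document; each statement's English description precedes it below -/
import Mathlib

section
/- If X is an ASQ Banach space, then for every finite-dimensional subspace E ⊂ X and every ε > 0 there exists y ∈ S_X such that (1 − ε)·max(‖x‖, |λ|) ≤ ‖x + λy‖ ≤ (1 + ε)·max(‖x‖, |λ|) for all scalars λ and all x ∈ E. -/
/-!
A compact set of unit vectors — such as the unit sphere of a finite-dimensional subspace `E` —
is covered by finitely many `ε/2`-balls, so applying ASQ to their centres yields one unit
vector `y` with `‖x ± y‖ ≤ 1 + ε` for every unit `x ∈ E`. Convexity of the norm propagates this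
to `‖x + t • y‖ ≤ 1 + ε` whenever `x ∈ E`, `‖x‖ ≤ 1` and `|t| ≤ 1`, and homogeneity gives the
upper estimate. The lower one follows from `2 max ‖x‖ |λ| ≤ ‖x + λ • y‖ + ‖x - λ • y‖`.
-/

/-- A Banach space is almost square (ASQ): for every finite set of unit vectors
and every `ε > 0` there is a unit vector `y` with `‖x ± y‖ ≤ 1 + ε` for all `x`
in the finite set. -/
def IsASQ (X : Type*) [NormedAddCommGroup X] [NormedSpace ℝ X] : Prop :=
  ∀ S : Finset X, (∀ x ∈ S, ‖x‖ = 1) → ∀ ε : ℝ, 0 < ε →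
    ∃ y : X, ‖y‖ = 1 ∧ ∀ x ∈ S, ‖x + y‖ ≤ 1 + ε ∧ ‖x - y‖ ≤ 1 + ε

section

variable {X : Type*} [NormedAddCommGroup X] [NormedSpace ℝ X]

theorem norm_add_smul_le_of_norm_add_le_of_norm_sub_le {z y : X} {c t : ℝ}
    (hadd : ‖z + y‖ ≤ c) (hsub : ‖z - y‖ ≤ c) (ht : |t| ≤ 1) : ‖z + t • y‖ ≤ c := by
  obtain ⟨ht₁, ht₂⟩ := abs_le.mp ht
  have hcomb : z + t • y = ((1 + t) / 2) • (z + y) + ((1 - t) / 2) • (z - y) := by module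
  have hmem := convex_closedBall (0 : X) c
    (mem_closedBall_zero_iff.mpr hadd) (mem_closedBall_zero_iff.mpr hsub)
    (by linarith : 0 ≤ (1 + t) / 2) (by linarith : 0 ≤ (1 - t) / 2) (by ring)
  rwa [← hcomb, mem_closedBall_zero_iff] at hmem

theorem norm_add_le_of_forall_norm_eq_one {E : Submodule ℝ X} {w : X} {c : ℝ}
    (hsphere : ∀ u ∈ E, ‖u‖ = 1 → ‖u + w‖ ≤ c) (hw : ‖w‖ ≤ c)
    {x : X} (hx : x ∈ E) (hx₁ : ‖x‖ ≤ 1) : ‖x + w‖ ≤ c := by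
  rcases eq_or_ne x 0 with rfl | hx₀
  · simpa using hw
  have hpos : 0 < ‖x‖ := norm_pos_iff.mpr hx₀
  have hunit : ‖‖x‖⁻¹ • x‖ = 1 := norm_smul_inv_norm hx₀
  have hcomb : x + w = ‖x‖ • (‖x‖⁻¹ • x + w) + (1 - ‖x‖) • w := by
    rw [smul_add, smul_inv_smul₀ hpos.ne']
    module
  have hmem := convex_closedBall (0 : X) c
    (mem_closedBall_zero_iff.mpr (hsphere _ (E.smul_mem _ hx) hunit))
    (mem_closedBall_zero_iff.mpr hw) hpos.le (by linarith : (0 : ℝ) ≤ 1 - ‖x‖) (by ring)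
  rwa [← hcomb, mem_closedBall_zero_iff] at hmem

theorem norm_add_smul_le_mul_max {E : Submodule ℝ X} {y : X} {c : ℝ}
    (hball : ∀ x ∈ E, ‖x‖ ≤ 1 → ∀ t : ℝ, |t| ≤ 1 → ‖x + t • y‖ ≤ c)
    {x : X} (hx : x ∈ E) (lam : ℝ) : ‖x + lam • y‖ ≤ c * max ‖x‖ |lam| := by
  set m := max ‖x‖ |lam|
  rcases (le_max_of_le_left (norm_nonneg x) : 0 ≤ m).eq_or_lt with hm | hm
  · have hx₀ : x = 0 := norm_le_zero_iff.mp (hm ▸ le_max_left _ _)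
    have hlam : lam = 0 := abs_nonpos_iff.mp (hm ▸ le_max_right _ _)
    simp [m, hx₀, hlam]
  have hx₁ : ‖m⁻¹ • x‖ ≤ 1 := by
    rw [norm_smul, Real.norm_of_nonneg (inv_nonneg.mpr hm.le), inv_mul_le_one₀ hm]
    exact le_max_left _ _
  have hlam₁ : |m⁻¹ * lam| ≤ 1 := by
    rw [abs_mul, abs_of_pos (inv_pos.mpr hm), inv_mul_le_one₀ hm]
    exact le_max_right _ _
  have hscale : x + lam • y = m • (m⁻¹ • x + (m⁻¹ * lam) • y) := by
    rw [smul_add, smul_inv_smul₀ hm.ne', smul_smul, mul_inv_cancel_left₀ hm.ne']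
  rw [hscale, norm_smul, Real.norm_of_nonneg hm.le, mul_comm]
  exact mul_le_mul_of_nonneg_right (hball _ (E.smul_mem _ hx) hx₁ _ hlam₁) hm.le

theorem two_mul_max_norm_le_norm_add_add_norm_sub (x v : X) :
    2 * max ‖x‖ ‖v‖ ≤ ‖x + v‖ + ‖x - v‖ := by
  rw [mul_max_of_nonneg _ _ zero_le_two]
  refine max_le ?_ ?_
  · calc 2 * ‖x‖ = ‖(x + v) + (x - v)‖ := by
          rw [add_add_sub_cancel, ← two_smul ℝ x, norm_smul, Real.norm_two]
      _ ≤ ‖x + v‖ + ‖x - v‖ := norm_add_le _ _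
  · calc 2 * ‖v‖ = ‖(x + v) - (x - v)‖ := by
          rw [add_sub_sub_cancel, ← two_smul ℝ v, norm_smul, Real.norm_two]
      _ ≤ ‖x + v‖ + ‖x - v‖ := norm_sub_le _ _

theorem IsASQ.exists_forall_of_isCompact (hX : IsASQ X) {K : Set X} (hK : IsCompact K)
    (hK₁ : ∀ x ∈ K, ‖x‖ = 1) {ε : ℝ} (hε : 0 < ε) :
    ∃ y : X, ‖y‖ = 1 ∧ ∀ x ∈ K, ‖x + y‖ ≤ 1 + ε ∧ ‖x - y‖ ≤ 1 + ε := by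
  obtain ⟨S, hSK, hKS⟩ :=
    hK.elim_nhds_subcover (fun x => Metric.ball x (ε / 2)) fun x _ =>
      Metric.ball_mem_nhds x (half_pos hε)
  obtain ⟨y, hy, hS⟩ := hX S (fun z hz => hK₁ z (hSK z hz)) (ε / 2) (half_pos hε)
  refine ⟨y, hy, fun x hx => ?_⟩
  obtain ⟨z, hz, hxz⟩ := Set.mem_iUnion₂.mp (hKS hx)
  have hxz' : ‖x - z‖ < ε / 2 := by rwa [← dist_eq_norm]
  obtain ⟨hadd, hsub⟩ := hS z hz
  constructor
  · calc ‖x + y‖ = ‖(z + y) + (x - z)‖ := by abel_nf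
      _ ≤ ‖z + y‖ + ‖x - z‖ := norm_add_le _ _
      _ ≤ 1 + ε := by linarith
  · calc ‖x - y‖ = ‖(z - y) + (x - z)‖ := by abel_nf
      _ ≤ ‖z - y‖ + ‖x - z‖ := norm_add_le _ _
      _ ≤ 1 + ε := by linarith

theorem IsASQ.exists_forall_submodule (hX : IsASQ X) (E : Submodule ℝ X)
    [FiniteDimensional ℝ E] {ε : ℝ} (hε : 0 < ε) :
    ∃ y : X, ‖y‖ = 1 ∧ ∀ x ∈ E, ‖x‖ = 1 → ‖x + y‖ ≤ 1 + ε ∧ ‖x - y‖ ≤ 1 + ε := by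
  have hK : IsCompact ((↑) '' Metric.sphere (0 : E) 1 : Set X) :=
    (isCompact_sphere _ _).image continuous_subtype_val
  obtain ⟨y, hy, hK⟩ := hX.exists_forall_of_isCompact hK (by simp +contextual) hε
  exact ⟨y, hy, fun x hx hx₁ => hK x ⟨⟨x, hx⟩, by simpa using hx₁, rfl⟩⟩

end

theorem stmt_4_general (X : Type*) [NormedAddCommGroup X] [NormedSpace ℝ X]
    (h : IsASQ X) (E : Submodule ℝ X) (hE : FiniteDimensional ℝ E)
    (ε : ℝ) (hε : 0 < ε) :
    ∃ y : X, ‖y‖ = 1 ∧ ∀ x ∈ E, ∀ lam : ℝ,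
      (1 - ε) * max ‖x‖ |lam| ≤ ‖x + lam • y‖ ∧
        ‖x + lam • y‖ ≤ (1 + ε) * max ‖x‖ |lam| := by
  obtain ⟨y, hy, hsphere⟩ := h.exists_forall_submodule E hε
  have hball : ∀ x ∈ E, ‖x‖ ≤ 1 → ∀ t : ℝ, |t| ≤ 1 → ‖x + t • y‖ ≤ 1 + ε := fun x hx hx₁ t ht =>
    norm_add_le_of_forall_norm_eq_one
      (fun u hu hu₁ => norm_add_smul_le_of_norm_add_le_of_norm_sub_le
        (hsphere u hu hu₁).1 (hsphere u hu hu₁).2 ht)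
      (by rw [norm_smul, hy, mul_one, Real.norm_eq_abs]; linarith) hx hx₁
  refine ⟨y, hy, fun x hx lam => ⟨?_, norm_add_smul_le_mul_max hball hx lam⟩⟩
  have hsub : ‖x - lam • y‖ ≤ (1 + ε) * max ‖x‖ |lam| := by
    simpa [sub_eq_add_neg] using norm_add_smul_le_mul_max hball hx (-lam)
  have hlower := two_mul_max_norm_le_norm_add_add_norm_sub x (lam • y)
  rw [norm_smul, hy, mul_one, Real.norm_eq_abs] at hlower
  linarith

theorem stmt_4 (X : Type*) [NormedAddCommGroup X] [NormedSpace ℝ X] [CompleteSpace X]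
    (h : IsASQ X) (E : Submodule ℝ X) (hE : FiniteDimensional ℝ E)
    (ε : ℝ) (hε : 0 < ε) :
    ∃ y : X, ‖y‖ = 1 ∧ ∀ x ∈ E, ∀ lam : ℝ,
      (1 - ε) * max ‖x‖ |lam| ≤ ‖x + lam • y‖ ∧
        ‖x + lam • y‖ ≤ (1 + ε) * max ‖x‖ |lam| :=
  stmt_4_general X h E hE ε hε
end

section
/- If X is an ASQ Banach space, E ⊂ X a finite-dimensional subspace, F ⊂ X* a finite-dimensional subspace of the dual, and ε > 0, then there exists y ∈ S_X such that (1 − ε)·max(‖x‖, |λ|) ≤ ‖x + λy‖ ≤ (1 + ε)·max(‖x‖, |λ|) for all x ∈ E and scalars λ, and additionally |f(y)| ≤ ε‖f‖ for every f ∈ F. -/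
open Finset

section

variable {X : Type*} [NormedAddCommGroup X] [NormedSpace ℝ X]

def IsSphereNet (p : Submodule ℝ X) (T : Finset X) (η : ℝ) : Prop :=
  (∀ u ∈ T, ‖u‖ = 1) ∧ ∀ v ∈ p, ‖v‖ = 1 → ∃ u ∈ T, ‖v - u‖ < η

lemma Submodule.exists_isSphereNet (p : Submodule ℝ X) [FiniteDimensional ℝ p] {η : ℝ}
    (hη : 0 < η) : ∃ T : Finset X, IsSphereNet p T η := by
  have hK : IsCompact ((↑) '' Metric.sphere (0 : p) 1 : Set X) :=
    (isCompact_sphere 0 1).image continuous_subtype_val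
  obtain ⟨t, hts, htf, hcov⟩ := finite_cover_balls_of_compact hK hη
  refine ⟨htf.toFinset, fun u hu => ?_, fun v hv hv1 => ?_⟩
  · obtain ⟨w, hw, rfl⟩ := hts (htf.mem_toFinset.mp hu)
    simpa using hw
  · obtain ⟨u, hu, hvu⟩ := Set.mem_iUnion₂.mp (hcov ⟨⟨v, hv⟩, by simpa using hv1, rfl⟩)
    exact ⟨u, htf.mem_toFinset.mpr hu, by rwa [← dist_eq_norm]⟩

lemma norm_smul_add_smul_le_of_norm_add_sub_le {u y : X} {δ c t : ℝ} (hδ : 0 ≤ δ)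
    (hy : ‖y‖ ≤ 1) (hadd : ‖u + y‖ ≤ 1 + δ) (hsub : ‖u - y‖ ≤ 1 + δ) (hc : 0 ≤ c) :
    ‖c • u + t • y‖ ≤ (1 + δ) * max c |t| := by
  have segment : ∀ s : ℝ, |s| ≤ 1 → ‖u + s • y‖ ≤ 1 + δ := by
    intro s hs
    obtain ⟨hs₁, hs₂⟩ := abs_le.mp hs
    calc ‖u + s • y‖ = ‖((1 + s) / 2) • (u + y) + ((1 - s) / 2) • (u - y)‖ := by
          congr 1; module
      _ ≤ (1 + s) / 2 * ‖u + y‖ + (1 - s) / 2 * ‖u - y‖ := by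
          refine (norm_add_le _ _).trans_eq ?_
          rw [norm_smul_of_nonneg (by linarith), norm_smul_of_nonneg (by linarith)]
      _ ≤ (1 + s) / 2 * (1 + δ) + (1 - s) / 2 * (1 + δ) := by gcongr; linarith
      _ = 1 + δ := by ring
  have ball : ∀ a s : ℝ, 0 ≤ a → a ≤ 1 → |s| ≤ 1 → ‖a • u + s • y‖ ≤ 1 + δ := by
    intro a s ha ha₁ hs
    have hsy : |s| * ‖y‖ ≤ 1 := mul_le_one₀ hs (norm_nonneg y) hy
    calc ‖a • u + s • y‖ = ‖a • (u + s • y) + (1 - a) • s • y‖ := by congr 1; module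
      _ ≤ a * ‖u + s • y‖ + (1 - a) * (|s| * ‖y‖) := by
          refine (norm_add_le _ _).trans_eq ?_
          rw [norm_smul_of_nonneg ha, norm_smul_of_nonneg (by linarith), norm_smul,
            Real.norm_eq_abs]
      _ ≤ a * (1 + δ) + (1 - a) * 1 :=
          add_le_add (mul_le_mul_of_nonneg_left (segment s hs) ha)
            (mul_le_mul_of_nonneg_left hsy (by linarith))
      _ ≤ 1 + δ := by nlinarith
  set M := max c |t|
  rcases (hc.trans (le_max_left c |t|)).eq_or_lt with hM | hM
  · have hc0 : c = 0 := le_antisymm (hM ▸ le_max_left _ _) hc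
    have ht0 : t = 0 := abs_eq_zero.mp (le_antisymm (hM ▸ le_max_right _ _) (abs_nonneg t))
    simp only [hc0, ht0, zero_smul, add_zero, norm_zero]
    exact mul_nonneg (by linarith) (hc.trans (le_max_left _ _))
  · have hscale : c • u + t • y = M • ((c / M) • u + (t / M) • y) := by
      rw [smul_add, smul_smul, smul_smul, mul_div_cancel₀ _ hM.ne', mul_div_cancel₀ _ hM.ne']
    rw [hscale, norm_smul_of_nonneg hM.le, mul_comm]
    gcongr
    refine ball _ _ (div_nonneg hc hM.le) ((div_le_one hM).mpr (le_max_left _ _)) ?_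
    rw [abs_div, abs_of_pos hM]
    exact (div_le_one hM).mpr (le_max_right _ _)

lemma IsASQ.exists_norm_smul_add_smul_le (h : IsASQ X) (S : Finset X) {δ : ℝ} (hδ : 0 < δ) :
    ∃ y : X, ‖y‖ = 1 ∧
      ∀ x ∈ S, ∀ c t : ℝ, 0 ≤ c → ‖c • x + t • y‖ ≤ (1 + δ) * max (c * ‖x‖) |t| := by
  classical
  obtain ⟨y, hy, hyS⟩ := h ((S.filter (· ≠ 0)).image fun x => ‖x‖⁻¹ • x)
    (by simp only [mem_image, mem_filter]; rintro _ ⟨x, ⟨-, hx⟩, rfl⟩; simp [norm_smul, hx]) δ hδ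
  refine ⟨y, hy, fun x hx c t hc => ?_⟩
  rcases eq_or_ne x 0 with rfl | hx0
  · simp only [smul_zero, zero_add, norm_zero, mul_zero, norm_smul, Real.norm_eq_abs, hy,
      mul_one, max_eq_right (abs_nonneg t)]
    nlinarith [abs_nonneg t]
  · have hxn : 0 < ‖x‖ := norm_pos_iff.mpr hx0
    obtain ⟨hadd, hsub⟩ := hyS _ (mem_image_of_mem _ (mem_filter.mpr ⟨hx, hx0⟩))
    have hcx : c • x = (c * ‖x‖) • ‖x‖⁻¹ • x := by
      rw [smul_smul, mul_assoc, mul_inv_cancel₀ hxn.ne', mul_one]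
    rw [hcx]
    exact norm_smul_add_smul_le_of_norm_add_sub_le hδ.le hy.le hadd hsub (by positivity)

lemma IsASQ.exists_norm_signSum_le (h : IsASQ X) (T : Finset X) {δ : ℝ} (hδ : 0 < δ) (n : ℕ) :
    ∃ y : Fin n → X, (∀ i, ‖y i‖ = 1) ∧
      (∀ i, ∀ x ∈ T, ∀ c t : ℝ, 0 ≤ c → ‖c • x + t • y i‖ ≤ (1 + δ) * max (c * ‖x‖) |t|) ∧
      ∀ s : Fin n → SignType, ‖∑ i, (s i : ℝ) • y i‖ ≤ (1 + δ) ^ n := by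
  classical
  induction n with
  | zero => exact ⟨Fin.elim0, fun i => i.elim0, fun i => i.elim0, by simp⟩
  | succ n ih =>
    obtain ⟨y, hy, hyT, hyS⟩ := ih
    obtain ⟨z, hz, hzS⟩ := h.exists_norm_smul_add_smul_le
      (T ∪ univ.image fun s : Fin n → SignType => ∑ i, (s i : ℝ) • y i) hδ
    refine ⟨Fin.cons z y, Fin.cases hz hy,
      Fin.cases (fun x hx => hzS x (mem_union_left _ hx)) hyT, fun s => ?_⟩
    have hs₀ : |(s 0 : ℝ)| ≤ 1 := by cases s 0 <;> simp
    have hA := hzS _ (mem_union_right _ (mem_image_of_mem _ (mem_univ (Fin.tail s)))) 1 (s 0)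
      zero_le_one
    rw [one_smul, one_mul] at hA
    calc ‖∑ i, (s i : ℝ) • (Fin.cons z y : Fin (n + 1) → X) i‖
        = ‖∑ i, (Fin.tail s i : ℝ) • y i + (s 0 : ℝ) • z‖ := by
          rw [Fin.sum_univ_succ, add_comm]; rfl
      _ ≤ (1 + δ) * max ‖∑ i, (Fin.tail s i : ℝ) • y i‖ |(s 0 : ℝ)| := hA
      _ ≤ (1 + δ) * (1 + δ) ^ n := by
          gcongr
          exact max_le (hyS _) (hs₀.trans (one_le_pow₀ (by linarith)))
      _ = (1 + δ) ^ (n + 1) := by ring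

lemma exists_forall_abs_apply_le_of_norm_signSum_le {ι : Type*} [Fintype ι] [Nonempty ι]
    (T : Finset (StrongDual ℝ X)) (hT : ∀ f ∈ T, ‖f‖ ≤ 1) (y : ι → X) {B : ℝ}
    (hB : ∀ s : ι → SignType, ‖∑ i, (s i : ℝ) • y i‖ ≤ B) :
    ∃ i, ∀ f ∈ T, |f (y i)| ≤ #T * B / Fintype.card ι := by
  have hB₀ : 0 ≤ B := by simpa using hB 0
  have hsum : ∀ f ∈ T, ∑ i, |f (y i)| ≤ B := fun f hf =>
    calc ∑ i, |f (y i)| = f (∑ i, (SignType.sign (f (y i)) : ℝ) • y i) := by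
          simp [map_sum, sign_mul_self]
      _ ≤ ‖f‖ * ‖∑ i, (SignType.sign (f (y i)) : ℝ) • y i‖ := (le_abs_self _).trans (f.le_opNorm _)
      _ ≤ 1 * B := by gcongr; exacts [hT f hf, hB _]
      _ = B := one_mul B
  have hcard : (Fintype.card ι : ℝ) ≠ 0 := by simp
  obtain ⟨i, -, hi⟩ := exists_le_of_sum_le (s := univ) univ_nonempty
    (f := fun i => ∑ f ∈ T, |f (y i)|) (g := fun _ => #T * B / Fintype.card ι) <| by
      rw [sum_comm, sum_const, card_univ, nsmul_eq_mul, mul_div_cancel₀ _ hcard]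
      simpa using sum_le_sum hsum
  exact ⟨i, fun f hf => (single_le_sum (fun f _ => abs_nonneg (f (y i))) hf).trans hi⟩

lemma IsSphereNet.norm_add_smul_le {E : Submodule ℝ X} {T : Finset X} {η δ : ℝ}
    (hT : IsSphereNet E T η) (hη : 0 ≤ η) (hδ : 0 ≤ δ) {y : X} (hy : ‖y‖ = 1)
    (hTy : ∀ u ∈ T, ∀ c t : ℝ, 0 ≤ c → ‖c • u + t • y‖ ≤ (1 + δ) * max (c * ‖u‖) |t|)
    {x : X} (hx : x ∈ E) (t : ℝ) :
    ‖x + t • y‖ ≤ (1 + δ + η) * max ‖x‖ |t| := by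
  rcases eq_or_ne x 0 with rfl | hx0
  · rw [zero_add, norm_smul, hy, mul_one, Real.norm_eq_abs, norm_zero, max_eq_right (abs_nonneg t)]
    nlinarith [abs_nonneg t]
  · have hxn : 0 < ‖x‖ := norm_pos_iff.mpr hx0
    obtain ⟨u, hu, hvu⟩ := hT.2 (‖x‖⁻¹ • x) (E.smul_mem _ hx) (by simp [norm_smul, hxn.ne'])
    have hsplit : x + t • y = (‖x‖ • u + t • y) + ‖x‖ • (‖x‖⁻¹ • x - u) := by
      rw [smul_sub, smul_smul, mul_inv_cancel₀ hxn.ne', one_smul]; abel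
    have hux := hTy u hu ‖x‖ t hxn.le
    rw [hT.1 u hu, mul_one] at hux
    calc ‖x + t • y‖ ≤ (1 + δ) * max ‖x‖ |t| + ‖x‖ * η := by
          rw [hsplit]
          refine (norm_add_le _ _).trans (add_le_add hux ?_)
          rw [norm_smul_of_nonneg hxn.le]
          exact mul_le_mul_of_nonneg_left hvu.le hxn.le
      _ ≤ (1 + δ + η) * max ‖x‖ |t| := by nlinarith [le_max_left ‖x‖ |t|]

lemma one_sub_mul_max_le_norm_add_smul {x y : X} {ε : ℝ} (hy : ‖y‖ = 1)
    (h : ∀ t : ℝ, ‖x + t • y‖ ≤ (1 + ε) * max ‖x‖ |t|) (t : ℝ) :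
    (1 - ε) * max ‖x‖ |t| ≤ ‖x + t • y‖ := by
  have hneg : ‖x - t • y‖ ≤ (1 + ε) * max ‖x‖ |t| := by
    simpa [sub_eq_add_neg] using h (-t)
  have hx : 2 * ‖x‖ ≤ ‖x + t • y‖ + ‖x - t • y‖ := by
    simpa [← two_smul ℝ x, norm_smul] using norm_add_le (x + t • y) (x - t • y)
  have ht : 2 * |t| ≤ ‖x + t • y‖ + ‖x - t • y‖ := by
    have := norm_sub_le (x + t • y) (x - t • y)
    rwa [add_sub_sub_cancel, ← two_smul ℝ, smul_smul, norm_smul, hy, mul_one, Real.norm_eq_abs,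
      abs_mul, abs_two] at this
  have hmax : 2 * max ‖x‖ |t| ≤ ‖x + t • y‖ + ‖x - t • y‖ := by
    rcases max_choice ‖x‖ |t| with hm | hm <;> rw [hm] <;> assumption
  linarith

lemma IsSphereNet.abs_apply_le {F : Submodule ℝ (StrongDual ℝ X)} {T : Finset (StrongDual ℝ X)}
    {η α : ℝ} (hT : IsSphereNet F T η) {y : X} (hy : ‖y‖ = 1) (hTy : ∀ g ∈ T, |g y| ≤ α)
    {f : StrongDual ℝ X} (hf : f ∈ F) :
    |f y| ≤ (α + η) * ‖f‖ := by
  rcases eq_or_ne f 0 with rfl | hf0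
  · simp
  · have hfn : 0 < ‖f‖ := norm_pos_iff.mpr hf0
    obtain ⟨g, hg, hfg⟩ := hT.2 (‖f‖⁻¹ • f) (F.smul_mem _ hf) (by simp [norm_smul, hfn.ne'])
    have hdiff : |(‖f‖⁻¹ • f - g) y| ≤ ‖‖f‖⁻¹ • f - g‖ := by
      simpa [hy] using (‖f‖⁻¹ • f - g).le_opNorm y
    have hunit : ‖f‖⁻¹ * |f y| ≤ α + η := by
      have hsplit : (‖f‖⁻¹ • f - g) y + g y = ‖f‖⁻¹ * f y := by simp
      have := abs_add_le ((‖f‖⁻¹ • f - g) y) (g y)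
      rw [hsplit, abs_mul, abs_inv, abs_norm] at this
      linarith [hTy g hg]
    calc |f y| = ‖f‖ * (‖f‖⁻¹ * |f y|) := by field_simp
      _ ≤ ‖f‖ * (α + η) := by gcongr
      _ = (α + η) * ‖f‖ := mul_comm _ _

end

theorem stmt_5_general (X : Type*) [NormedAddCommGroup X] [NormedSpace ℝ X]
    (h : IsASQ X) (E : Submodule ℝ X) (hE : FiniteDimensional ℝ E)
    (F : Submodule ℝ (StrongDual ℝ X)) (hF : FiniteDimensional ℝ F)
    (ε : ℝ) (hε : 0 < ε) :
    ∃ y : X, ‖y‖ = 1 ∧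
      (∀ x ∈ E, ∀ lam : ℝ,
        (1 - ε) * max ‖x‖ |lam| ≤ ‖x + lam • y‖ ∧
          ‖x + lam • y‖ ≤ (1 + ε) * max ‖x‖ |lam|) ∧
      (∀ f ∈ F, |f y| ≤ ε * ‖f‖) := by
  obtain ⟨TE, hTE⟩ := E.exists_isSphereNet (half_pos hε)
  obtain ⟨TF, hTF⟩ := F.exists_isSphereNet (half_pos hε)
  set n := ⌈6 * #TF / ε⌉₊ + 1
  have hn : (0 : ℝ) < n := by positivity
  set δ := min (ε / 2) (n : ℝ)⁻¹
  have hδ : 0 < δ := lt_min (half_pos hε) (inv_pos.mpr hn)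
  obtain ⟨y, hy, hyTE, hyB⟩ := h.exists_norm_signSum_le TE hδ n
  have hB : (1 + δ) ^ n ≤ 3 := calc
    (1 + δ) ^ n ≤ (1 + (n : ℝ)⁻¹) ^ n := by gcongr; exact min_le_right _ _
    _ ≤ 3 := Real.one_add_inv_pow_le_exp.trans Real.exp_one_lt_three.le
  have : Nonempty (Fin n) := ⟨0, by omega⟩
  obtain ⟨i, hi⟩ := exists_forall_abs_apply_le_of_norm_signSum_le TF (fun f hf => (hTF.1 f hf).le)
    y fun s => (hyB s).trans hB
  have hsmall : #TF * 3 / Fintype.card (Fin n) ≤ ε / 2 := by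
    rw [Fintype.card_fin, div_le_iff₀ hn]
    have := Nat.le_ceil (6 * #TF / ε)
    rw [div_le_iff₀ hε] at this
    push_cast [n]
    nlinarith
  have hupper : ∀ x ∈ E, ∀ t : ℝ, ‖x + t • y i‖ ≤ (1 + ε) * max ‖x‖ |t| := fun x hx t => by
    refine (hTE.norm_add_smul_le (half_pos hε).le hδ.le (hy i) (hyTE i) hx t).trans ?_
    gcongr ?_ * _
    linarith [min_le_left (ε / 2) (n : ℝ)⁻¹]
  refine ⟨y i, hy i, fun x hx t => ⟨?_, hupper x hx t⟩, fun f hf => ?_⟩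
  · exact one_sub_mul_max_le_norm_add_smul (hy i) (hupper x hx) t
  · refine (hTF.abs_apply_le (hy i) (fun g hg => (hi g hg).trans hsmall) hf).trans_eq ?_
    ring

theorem stmt_5 (X : Type*) [NormedAddCommGroup X] [NormedSpace ℝ X] [CompleteSpace X]
    (h : IsASQ X) (E : Submodule ℝ X) (hE : FiniteDimensional ℝ E)
    (F : Submodule ℝ (StrongDual ℝ X)) (hF : FiniteDimensional ℝ F)
    (ε : ℝ) (hε : 0 < ε) :
    ∃ y : X, ‖y‖ = 1 ∧
      (∀ x ∈ E, ∀ lam : ℝ,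
        (1 - ε) * max ‖x‖ |lam| ≤ ‖x + lam • y‖ ∧
          ‖x + lam • y‖ ≤ (1 + ε) * max ‖x‖ |lam|) ∧
      (∀ f ∈ F, |f y| ≤ ε * ‖f‖) :=
  stmt_5_general X h E hE F hF ε hε
end

section
/- If X is an ASQ Banach space, then the dual X* is octahedral: for every finite subset x_1*,…,x_n* ∈ S_{X*} and every ε > 0 there exists y* ∈ S_{X*} such that ‖x_i* + y*‖ ≥ 2 − ε and ‖x_i* − y*‖ ≥ 2 − ε for all i. -/
section

variable {X : Type*} [NormedAddCommGroup X] [NormedSpace ℝ X]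

theorem IsASQ.nontrivial (h : IsASQ X) : Nontrivial X := by
  obtain ⟨y, hy, -⟩ := h ∅ (by simp) 1 one_pos
  exact nontrivial_of_ne y 0 (norm_ne_zero_iff.mp (by rw [hy]; exact one_ne_zero))

theorem StrongDual.exists_norm_eq_one_lt_apply [Nontrivial X] (f : StrongDual ℝ X) {r : ℝ}
    (hr : r < ‖f‖) : ∃ x : X, ‖x‖ = 1 ∧ r < f x := by
  rw [← f.sSup_sphere_eq_norm] at hr
  obtain ⟨-, ⟨x, hx, rfl⟩, hrx : r < ‖f x‖⟩ :=
    exists_lt_of_lt_csSup ((NormedSpace.sphere_nonempty.mpr zero_le_one).image _) hr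
  rw [mem_sphere_zero_iff_norm] at hx
  rcases le_or_gt 0 (f x) with hfx | hfx
  · exact ⟨x, hx, by rwa [Real.norm_of_nonneg hfx] at hrx⟩
  · exact ⟨-x, by rwa [norm_neg], by rwa [map_neg, ← Real.norm_of_nonpos hfx.le]⟩

theorem StrongDual.apply_le_norm_mul_norm (f : StrongDual ℝ X) (x : X) : f x ≤ ‖f‖ * ‖x‖ :=
  (Real.le_norm_self _).trans (f.le_opNorm x)

theorem two_sub_le_norm_add_of_almost_square {f g : StrongDual ℝ X} {x y : X} {δ : ℝ}
    (hδ : 0 ≤ δ) (hf : ‖f‖ ≤ 1) (hg : ‖g‖ ≤ 1) (hadd : ‖x + y‖ ≤ 1 + δ) (hsub : ‖x - y‖ ≤ 1 + δ)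
    (hfx : 1 - δ ≤ f x) (hgy : 1 - δ ≤ g y) : 2 - 8 * δ ≤ ‖f + g‖ := by
  have hsum : (f + g) (x + y) + (f - g) (x - y) = 2 * (f x + g y) := by
    simp only [add_apply, sub_apply, map_add, map_sub]
    ring
  have hfg_add : ‖f + g‖ ≤ 2 := (norm_add_le f g).trans (by linarith)
  have hfg_sub : ‖f - g‖ ≤ 2 := (norm_sub_le f g).trans (by linarith)
  have hval_add : (f + g) (x + y) ≤ ‖f + g‖ * (1 + δ) :=
    ((f + g).apply_le_norm_mul_norm _).trans (by gcongr)
  have hval_sub : (f - g) (x - y) ≤ 2 * (1 + δ) :=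
    ((f - g).apply_le_norm_mul_norm _).trans (by gcongr)
  nlinarith [mul_nonneg hδ (sub_nonneg.mpr hfg_add)]

theorem two_sub_le_norm_add_and_sub_of_almost_square {f g : StrongDual ℝ X} {x y : X} {δ : ℝ}
    (hδ : 0 ≤ δ) (hf : ‖f‖ ≤ 1) (hg : ‖g‖ ≤ 1) (hadd : ‖x + y‖ ≤ 1 + δ) (hsub : ‖x - y‖ ≤ 1 + δ)
    (hfx : 1 - δ ≤ f x) (hgy : 1 - δ ≤ g y) : 2 - 8 * δ ≤ ‖f + g‖ ∧ 2 - 8 * δ ≤ ‖f - g‖ := by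
  refine ⟨two_sub_le_norm_add_of_almost_square hδ hf hg hadd hsub hfx hgy, ?_⟩
  rw [sub_eq_add_neg f g]
  refine two_sub_le_norm_add_of_almost_square (y := -y) hδ hf (by rwa [norm_neg]) ?_ ?_ hfx ?_
  · rwa [← sub_eq_add_neg]
  · rwa [sub_neg_eq_add]
  · rwa [neg_apply, map_neg, neg_neg]

end

theorem stmt_6_general (X : Type*) [NormedAddCommGroup X] [NormedSpace ℝ X]
    (h : IsASQ X) :
    ∀ S : Finset (StrongDual ℝ X), (∀ f ∈ S, ‖f‖ = 1) → ∀ ε : ℝ, 0 < ε →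
      ∃ g : StrongDual ℝ X, ‖g‖ = 1 ∧
        ∀ f ∈ S, 2 - ε ≤ ‖f + g‖ ∧ 2 - ε ≤ ‖f - g‖ := by
  intro S hS ε hε
  classical
  have := h.nontrivial
  have hnorming : ∀ f ∈ S, ∃ x : X, ‖x‖ = 1 ∧ 1 - ε / 8 < f x := fun f hf =>
    f.exists_norm_eq_one_lt_apply (by rw [hS f hf]; linarith)
  choose! φ hφ_norm hφ_apply using hnorming
  obtain ⟨y, hy, hφy⟩ := h (S.image φ) (by simpa using hφ_norm) (ε / 8) (by positivity)
  obtain ⟨g, hg, hgy⟩ := exists_dual_vector ℝ y (by rw [hy]; exact one_ne_zero)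
  refine ⟨g, hg, fun f hf => ?_⟩
  obtain ⟨hadd, hsub⟩ := hφy (φ f) (Finset.mem_image_of_mem φ hf)
  have hgy' : 1 - ε / 8 ≤ g y := by simp only [hgy, hy, RCLike.ofReal_one]; linarith
  have := two_sub_le_norm_add_and_sub_of_almost_square (by positivity) (hS f hf).le hg.le
    hadd hsub (hφ_apply f hf).le hgy'
  constructor <;> linarith

theorem stmt_6 (X : Type*) [NormedAddCommGroup X] [NormedSpace ℝ X] [CompleteSpace X]
    (h : IsASQ X) :
    ∀ S : Finset (StrongDual ℝ X), (∀ f ∈ S, ‖f‖ = 1) → ∀ ε : ℝ, 0 < ε →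
      ∃ g : StrongDual ℝ X, ‖g‖ = 1 ∧
        ∀ f ∈ S, 2 - ε ≤ ‖f + g‖ ∧ 2 - ε ≤ ‖f - g‖ :=
  stmt_6_general X h
end

section
/- If a Banach space X is ASQ, then X is WASQ: for every x ∈ S_X there exists a sequence (y_n) ⊂ B_X such that ‖x + y_n‖ → 1, ‖x − y_n‖ → 1, ‖y_n‖ → 1, and y_n → 0 weakly. -/
open Filter Topology

/-!
Choose unit vectors `y n` inductively, applying the ASQ property at step `n` with tolerance
`2⁻ⁿ` to `x` and to the normalisations of all signed sums `∑ k < n, ±y k` (signs may also be `0`).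
Then `‖x ± y n‖ → 1`, and adding `±y n` to a signed sum `u` with `‖u‖ ≥ 1` raises its norm by at
most `2⁻ⁿ`, so all signed sums are bounded by `4`. For `f` in the dual, taking the signs of
`f (y k)` gives `∑ k < n, |f (y k)| ≤ 4 ‖f‖`, hence `f (y n) → 0`.
-/

section

open Finset

variable {X : Type*} [NormedAddCommGroup X] [NormedSpace ℝ X]

theorem norm_add_le_norm_inv_smul_add_add (v w : X) (hv : v ≠ 0) :
    ‖v + w‖ ≤ ‖‖v‖⁻¹ • v + w‖ + |‖v‖ - 1| := by
  have hsplit : v + w = (‖v‖⁻¹ • v + w) + (1 - ‖v‖⁻¹) • v := by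
    rw [sub_smul, one_smul]; abel
  have hrest : ‖(1 - ‖v‖⁻¹) • v‖ = |‖v‖ - 1| := by
    rw [norm_smul, Real.norm_eq_abs, ← abs_norm v, ← abs_mul, abs_norm, sub_mul, one_mul,
      inv_mul_cancel₀ (norm_ne_zero_iff.2 hv)]
  rw [hsplit, ← hrest]
  exact norm_add_le _ _

theorem IsASQ.exists_norm_add_le (hX : IsASQ X) (S : Finset X) {ε : ℝ} (hε : 0 < ε) :
    ∃ y : X, ‖y‖ = 1 ∧ ∀ v ∈ S,
      ‖v + y‖ ≤ 1 + ε + |‖v‖ - 1| ∧ ‖v - y‖ ≤ 1 + ε + |‖v‖ - 1| := by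
  classical
  obtain ⟨y, hy, hS⟩ := hX ((S.image fun v => ‖v‖⁻¹ • v).filter fun u => ‖u‖ = 1)
    (fun u hu => (mem_filter.1 hu).2) ε hε
  refine ⟨y, hy, fun v hv => ?_⟩
  rcases eq_or_ne v 0 with rfl | hv0
  · simp only [zero_add, zero_sub, norm_neg, hy, norm_zero, abs_neg, abs_one]
    constructor <;> linarith
  obtain ⟨hadd, hsub⟩ := hS _ (mem_filter.2 ⟨mem_image_of_mem _ hv, norm_smul_inv_norm hv0⟩)
  have hadd' := norm_add_le_norm_inv_smul_add_add v y hv0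
  have hsub' := norm_add_le_norm_inv_smul_add_add v (-y) hv0
  simp only [← sub_eq_add_neg] at hsub'
  constructor <;> linarith

open scoped Classical in
/-- `signedSums y n` is the set of all sums `∑ k < n, s k • y k` with `s k ∈ {-1, 0, 1}`. -/
noncomputable def signedSums (y : ℕ → X) : ℕ → Finset X
  | 0 => {0}
  | n + 1 => (signedSums y n ×ˢ (univ : Finset SignType)).image fun p => p.1 + (p.2 : ℝ) • y n

theorem mem_signedSums_succ {y : ℕ → X} {n : ℕ} {v : X} :
    v ∈ signedSums y (n + 1) ↔ ∃ w ∈ signedSums y n, ∃ s : SignType, v = w + (s : ℝ) • y n := by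
  simp [signedSums, eq_comm]

theorem sum_range_mem_signedSums (y : ℕ → X) (s : ℕ → SignType) (n : ℕ) :
    ∑ k ∈ range n, (s k : ℝ) • y k ∈ signedSums y n := by
  induction n with
  | zero => simp [signedSums]
  | succ n ih => exact mem_signedSums_succ.2 ⟨_, ih, s n, sum_range_succ _ _⟩

theorem signedSums_congr {y y' : ℕ → X} {n : ℕ} (h : ∀ k < n, y k = y' k) :
    signedSums y n = signedSums y' n := by
  induction n with
  | zero => rfl
  | succ n ih => simp only [signedSums, ih fun k hk => h k (by omega), h n n.lt_succ_self]

theorem norm_le_of_mem_signedSums (y : ℕ → X) {ε : ℕ → ℝ} (hε : ∀ n, 0 ≤ ε n)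
    (hy : ∀ n, ∀ v ∈ signedSums y n,
      ‖v + y n‖ ≤ 1 + ε n + |‖v‖ - 1| ∧ ‖v - y n‖ ≤ 1 + ε n + |‖v‖ - 1|) :
    ∀ n, ∀ v ∈ signedSums y n, ‖v‖ ≤ 2 + ∑ k ∈ range n, ε k := by
  intro n
  induction n with
  | zero => simp [signedSums]
  | succ n ih =>
    intro v hv
    obtain ⟨w, hw, s, rfl⟩ := mem_signedSums_succ.1 hv
    have hw_le := ih w hw
    have hsum_nonneg : 0 ≤ ∑ k ∈ range n, ε k := sum_nonneg fun k _ => hε k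
    have habs : |‖w‖ - 1| ≤ 1 + ∑ k ∈ range n, ε k :=
      abs_le.2 ⟨by linarith [norm_nonneg w], by linarith⟩
    rw [sum_range_succ]
    cases s with
    | zero => simpa using hw_le.trans (by linarith [hε n])
    | pos => simpa using (hy n w hw).1.trans (by linarith)
    | neg => simpa [← sub_eq_add_neg] using (hy n w hw).2.trans (by linarith)

theorem tendsto_strongDual_apply_zero_of_norm_signedSums_le (y : ℕ → X) {C : ℝ}
    (h : ∀ n, ∀ v ∈ signedSums y n, ‖v‖ ≤ C) (f : StrongDual ℝ X) :
    Tendsto (fun n => f (y n)) atTop (𝓝 0) := by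
  have hsum : ∀ n, ∑ k ∈ range n, |f (y k)| ≤ ‖f‖ * C := fun n =>
    calc ∑ k ∈ range n, |f (y k)|
        = f (∑ k ∈ range n, (SignType.sign (f (y k)) : ℝ) • y k) := by
          simp [map_sum, sign_mul_self]
      _ ≤ ‖f‖ * ‖∑ k ∈ range n, (SignType.sign (f (y k)) : ℝ) • y k‖ :=
          (le_abs_self _).trans (f.le_opNorm _)
      _ ≤ ‖f‖ * C :=
          mul_le_mul_of_nonneg_left (h n _ (sum_range_mem_signedSums _ _ _)) (norm_nonneg f)
  exact (summable_of_sum_range_le (fun _ => abs_nonneg _) hsum).of_abs.tendsto_atTop_zero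

theorem tendsto_norm_add_sub_of_le {ι : Type*} {l : Filter ι} {x : X} (hx : ‖x‖ = 1)
    {y : ι → X} {ε : ι → ℝ} (hε : Tendsto ε l (𝓝 0))
    (h : ∀ i, ‖x + y i‖ ≤ 1 + ε i ∧ ‖x - y i‖ ≤ 1 + ε i) :
    Tendsto (fun i => ‖x + y i‖) l (𝓝 1) ∧ Tendsto (fun i => ‖x - y i‖) l (𝓝 1) := by
  have htwo : ∀ i, 2 ≤ ‖x + y i‖ + ‖x - y i‖ := fun i =>
    calc (2 : ℝ) = ‖(x + y i) + (x - y i)‖ := by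
          rw [add_add_sub_cancel, ← two_smul ℝ x, norm_smul, hx]; norm_num
      _ ≤ ‖x + y i‖ + ‖x - y i‖ := norm_add_le _ _
  have hlo : Tendsto (fun i => 1 - ε i) l (𝓝 1) := by simpa using tendsto_const_nhds.sub hε
  have hhi : Tendsto (fun i => 1 + ε i) l (𝓝 1) := by simpa using tendsto_const_nhds.add hε
  exact ⟨tendsto_of_tendsto_of_tendsto_of_le_of_le hlo hhi
      (fun i => by linarith [htwo i, h i]) fun i => (h i).1,
    tendsto_of_tendsto_of_tendsto_of_le_of_le hlo hhi
      (fun i => by linarith [htwo i, h i]) fun i => (h i).2⟩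

open scoped Classical in
/-- The `if` is there only to make the recursion well founded; `witnessSeq_spec` removes it. -/
noncomputable def IsASQ.witnessSeq (hX : IsASQ X) (x : X) (n : ℕ) : X :=
  (hX.exists_norm_add_le
    (insert x (signedSums (fun k => if h : k < n then hX.witnessSeq x k else 0) n))
    (pow_pos (by norm_num : (0 : ℝ) < 1 / 2) n)).choose

open scoped Classical in
theorem IsASQ.witnessSeq_spec (hX : IsASQ X) (x : X) (n : ℕ) :
    ‖hX.witnessSeq x n‖ = 1 ∧ ∀ v ∈ insert x (signedSums (hX.witnessSeq x) n),
      ‖v + hX.witnessSeq x n‖ ≤ 1 + (1 / 2) ^ n + |‖v‖ - 1| ∧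
      ‖v - hX.witnessSeq x n‖ ≤ 1 + (1 / 2) ^ n + |‖v‖ - 1| := by
  have hprefix : signedSums (hX.witnessSeq x) n =
      signedSums (fun k => if h : k < n then hX.witnessSeq x k else 0) n :=
    signedSums_congr fun k hk => by rw [dif_pos hk]
  rw [hprefix, IsASQ.witnessSeq]
  exact (hX.exists_norm_add_le _ (by positivity)).choose_spec

end

theorem stmt_8_general (X : Type*) [NormedAddCommGroup X] [NormedSpace ℝ X]
    (h : IsASQ X) :
    ∀ x : X, ‖x‖ = 1 → ∃ y : ℕ → X, (∀ n, ‖y n‖ ≤ 1) ∧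
      Tendsto (fun n => ‖x + y n‖) atTop (𝓝 1) ∧
      Tendsto (fun n => ‖x - y n‖) atTop (𝓝 1) ∧
      Tendsto (fun n => ‖y n‖) atTop (𝓝 1) ∧
      ∀ f : StrongDual ℝ X, Tendsto (fun n => f (y n)) atTop (𝓝 0) := by
  classical
  intro x hx
  have hspec := h.witnessSeq_spec x
  have hx_le : ∀ n, ‖x + h.witnessSeq x n‖ ≤ 1 + (1 / 2) ^ n ∧
      ‖x - h.witnessSeq x n‖ ≤ 1 + (1 / 2) ^ n := fun n => by
    simpa [hx] using (hspec n).2 x (Finset.mem_insert_self _ _)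
  have hsums_le : ∀ n, ∀ v ∈ signedSums (h.witnessSeq x) n, ‖v‖ ≤ 2 + 2 := fun n v hv =>
    (norm_le_of_mem_signedSums _ (fun k => by positivity)
      (fun k w hw => (hspec k).2 w (Finset.mem_insert_of_mem hw)) n v hv).trans
      (by linarith [sum_geometric_two_le n])
  obtain ⟨hadd, hsub⟩ := tendsto_norm_add_sub_of_le hx
    (tendsto_pow_atTop_nhds_zero_of_lt_one (by norm_num) (by norm_num)) hx_le
  exact ⟨h.witnessSeq x, fun n => (hspec n).1.le, hadd, hsub,
    (tendsto_congr fun n => (hspec n).1).2 tendsto_const_nhds,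
    tendsto_strongDual_apply_zero_of_norm_signedSums_le _ hsums_le⟩

theorem stmt_8 (X : Type*) [NormedAddCommGroup X] [NormedSpace ℝ X] [CompleteSpace X]
    (h : IsASQ X) :
    ∀ x : X, ‖x‖ = 1 → ∃ y : ℕ → X, (∀ n, ‖y n‖ ≤ 1) ∧
      Tendsto (fun n => ‖x + y n‖) atTop (𝓝 1) ∧
      Tendsto (fun n => ‖x - y n‖) atTop (𝓝 1) ∧
      Tendsto (fun n => ‖y n‖) atTop (𝓝 1) ∧
      ∀ f : StrongDual ℝ X, Tendsto (fun n => f (y n)) atTop (𝓝 0) :=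
  stmt_8_general X h
end

section
/- For any sequence (X_i) of nontrivial Banach spaces, the c_0-sum c_0(X_i) is ASQ. -/
/-!
Given finitely many unit vectors of `c₀(Xᵢ)` and `ε > 0`, their coordinates are all at most `ε`
in norm from some index `n` on. A unit vector `v ∈ Xₙ`, placed in coordinate `n`, then only
changes the `n`-th coordinates of `x ± v`, whose norms are at most `ε + 1`.
-/

open Filter Topology
open scoped ENNReal

/-- The `c₀`-sum of a sequence of normed spaces, realized as the subspace of the
`ℓ∞`-sum consisting of those elements `(x i)` with `‖x i‖ → 0`. -/
noncomputable def c0Sum (X : ℕ → Type*) [∀ i, NormedAddCommGroup (X i)] [∀ i, NormedSpace ℝ (X i)] :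
    Submodule ℝ (lp X ∞) where
  carrier := {f | Tendsto (fun i => ‖(f : ∀ i, X i) i‖) atTop (𝓝 0)}
  add_mem' := by
    intro f g hf hg
    have hsum : Tendsto (fun i => ‖(f : ∀ i, X i) i‖ + ‖(g : ∀ i, X i) i‖) atTop (𝓝 0) := by
      simpa using hf.add hg
    refine squeeze_zero (fun i => norm_nonneg _) (fun i => ?_) hsum
    simp only [lp.coeFn_add, Pi.add_apply]
    exact norm_add_le _ _
  zero_mem' := by
    simp only [Set.mem_setOf_eq, lp.coeFn_zero, Pi.zero_apply, norm_zero]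
    exact tendsto_const_nhds
  smul_mem' := by
    intro c f hf
    have : Tendsto (fun i => ‖c‖ * ‖(f : ∀ i, X i) i‖) atTop (𝓝 0) := by
      simpa using hf.const_mul ‖c‖
    refine squeeze_zero (fun i => norm_nonneg _) (fun i => ?_) this
    simp only [lp.coeFn_smul, Pi.smul_apply, norm_smul, le_refl]

namespace lp

variable {ι : Type*} [DecidableEq ι] {E : ι → Type*} [∀ i, NormedAddCommGroup (E i)]

theorem norm_add_single_le (f : lp E ∞) (n : ι) (v : E n) :
    ‖f + lp.single ∞ n v‖ ≤ max ‖f‖ (‖f n‖ + ‖v‖) := by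
  refine lp.norm_le_of_forall_le (le_max_of_le_left (norm_nonneg f)) fun i => ?_
  rw [lp.coeFn_add, Pi.add_apply]
  rcases eq_or_ne i n with rfl | hi
  · rw [lp.single_apply_self]
    exact le_max_of_le_right (norm_add_le (f i) v)
  · rw [lp.single_apply_ne ∞ n v hi, add_zero]
    exact le_max_of_le_left (lp.norm_apply_le_norm ENNReal.top_ne_zero f i)

end lp

section c0Sum

variable {X : ℕ → Type*} [∀ i, NormedAddCommGroup (X i)] [∀ i, NormedSpace ℝ (X i)]

theorem single_mem_c0Sum (n : ℕ) (v : X n) : lp.single ∞ n v ∈ c0Sum X :=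
  tendsto_const_nhds.congr' <| by
    filter_upwards [eventually_gt_atTop n] with i hi
    rw [lp.single_apply_ne ∞ n v hi.ne', norm_zero]

theorem c0Sum.eventually_forall_norm_apply_le (S : Finset (c0Sum X)) {ε : ℝ} (hε : 0 < ε) :
    ∀ᶠ n in atTop, ∀ f ∈ S, ‖(f : lp X ∞) n‖ ≤ ε :=
  (eventually_all_finset S).2 fun f _ => f.2.eventually (eventually_le_nhds hε)

end c0Sum

theorem stmt_10_general (X : ℕ → Type*) [∀ i, NormedAddCommGroup (X i)] [∀ i, NormedSpace ℝ (X i)]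
    [∀ i, Nontrivial (X i)] :
    IsASQ (c0Sum X) := by
  intro S hS ε hε
  obtain ⟨n, hn⟩ := (c0Sum.eventually_forall_norm_apply_le S hε).exists
  obtain ⟨v, hv⟩ := exists_norm_eq (X n) zero_le_one
  refine ⟨⟨lp.single ∞ n v, single_mem_c0Sum n v⟩, by simp [hv], fun f hf => ?_⟩
  have bound : ∀ w : X n, ‖w‖ = 1 → ‖(f : lp X ∞) + lp.single ∞ n w‖ ≤ 1 + ε := fun w hw =>
    (lp.norm_add_single_le _ n w).trans <|
      max_le ((hS f hf).trans_le (le_add_of_nonneg_right hε.le)) (by linarith [hn f hf])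
  exact ⟨bound v hv, by simpa [sub_eq_add_neg] using bound (-v) (by rwa [norm_neg])⟩

theorem stmt_10 (X : ℕ → Type*) [∀ i, NormedAddCommGroup (X i)] [∀ i, NormedSpace ℝ (X i)]
    [∀ i, CompleteSpace (X i)] [∀ i, Nontrivial (X i)] :
    IsASQ (c0Sum X) :=
  stmt_10_general X
end

section
/- The space X = {f ∈ C[0,1] : f(0) = −f(1)} with the supremum norm is LASQ but not ASQ. -/
/-- The subspace `{f ∈ C[0,1] : f 0 = -f 1}` of `C[0,1]`. -/
def X01 : Submodule ℝ C(Set.Icc (0:ℝ) 1, ℝ) where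
  carrier := {f | f ⟨0, by norm_num⟩ = - f ⟨1, by norm_num⟩}
  add_mem' := by
    intro f g hf hg
    simp only [Set.mem_setOf_eq, ContinuousMap.add_apply] at *
    rw [hf, hg]; ring
  zero_mem' := by simp
  smul_mem' := by
    intro c f hf
    simp only [Set.mem_setOf_eq, ContinuousMap.smul_apply] at *
    rw [hf, smul_neg]

/-- A Banach space is locally almost square (LASQ). -/
def IsLASQ (X : Type*) [NormedAddCommGroup X] [NormedSpace ℝ X] : Prop :=
  ∀ x : X, ‖x‖ = 1 → ∀ ε : ℝ, 0 < ε →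
    ∃ y : X, ‖y‖ = 1 ∧ ‖x + y‖ ≤ 1 + ε ∧ ‖x - y‖ ≤ 1 + ε

/-!
Since `f 0 = -f 1`, every `f ∈ X` has a zero `t₀`, and a tent of height one supported in a small
interval near `t₀` on which `|f| ≤ ε`, and vanishing at the endpoints, lies in `X` and satisfies
`‖f ± g‖ ≤ 1 + ε`. On the other hand `|1 - 2t| + max 0 (1 - |1 - 2t|) ≥ 1`, and
`|x t| + |y t| ≤ max ‖x + y‖ ‖x - y‖`, so a `y` that is almost square to both of these unit vectors
has `‖y‖ ≤ 1/2 + ε`.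
-/

theorem abs_add_abs_le_max_abs_add_abs_sub {G : Type*} [AddCommGroup G] [LinearOrder G]
    [IsOrderedAddMonoid G] (a b : G) : |a| + |b| ≤ max |a + b| |a - b| := by
  have hadd := abs_add_eq_add_abs_iff a b
  have hsub := abs_add_eq_add_abs_iff a (-b)
  rw [abs_neg, ← sub_eq_add_neg, neg_nonneg, neg_nonpos] at hsub
  rcases le_total 0 a with ha | ha <;> rcases le_total 0 b with hb | hb
  · exact le_max_of_le_left (hadd.mpr (.inl ⟨ha, hb⟩)).ge
  · exact le_max_of_le_right (hsub.mpr (.inl ⟨ha, hb⟩)).ge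
  · exact le_max_of_le_right (hsub.mpr (.inr ⟨ha, hb⟩)).ge
  · exact le_max_of_le_left (hadd.mpr (.inr ⟨ha, hb⟩)).ge

namespace ContinuousMap

variable {α : Type*} [TopologicalSpace α] [CompactSpace α]

theorem abs_apply_add_abs_apply_le {f g : C(α, ℝ)} {b : ℝ} (hadd : ‖f + g‖ ≤ b)
    (hsub : ‖f - g‖ ≤ b) (t : α) : |f t| + |g t| ≤ b :=
  (abs_add_abs_le_max_abs_add_abs_sub _ _).trans <|
    max_le ((f + g).norm_coe_le_norm t |>.trans hadd) ((f - g).norm_coe_le_norm t |>.trans hsub)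

theorem norm_le_of_le_abs_add_abs [Nonempty α] {u v y : C(α, ℝ)} {b c : ℝ}
    (huv : ∀ t, c ≤ |u t| + |v t|) (hu : ‖u + y‖ ≤ b ∧ ‖u - y‖ ≤ b)
    (hv : ‖v + y‖ ≤ b ∧ ‖v - y‖ ≤ b) : ‖y‖ ≤ b - c / 2 := by
  refine (norm_le_of_nonempty y).mpr fun t => ?_
  have := abs_apply_add_abs_apply_le hu.1 hu.2 t
  have := abs_apply_add_abs_apply_le hv.1 hv.2 t
  have := huv t
  rw [Real.norm_eq_abs]
  linarith

theorem norm_add_le_max_of_abs_le_on_support {f g : C(α, ℝ)} {ε : ℝ}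
    (h : ∀ t, g t ≠ 0 → |f t| ≤ ε) : ‖f + g‖ ≤ max ‖f‖ (ε + ‖g‖) := by
  refine (norm_le _ ((norm_nonneg f).trans (le_max_left _ _))).mpr fun t => ?_
  rw [add_apply]
  by_cases hg : g t = 0
  · simpa [hg] using (f.norm_coe_le_norm t).trans (le_max_left _ _)
  · refine (norm_add_le _ _).trans (le_max_of_le_right ?_)
    exact add_le_add (h t hg) (g.norm_coe_le_norm t)

theorem norm_sub_le_max_of_abs_le_on_support {f g : C(α, ℝ)} {ε : ℝ}
    (h : ∀ t, g t ≠ 0 → |f t| ≤ ε) : ‖f - g‖ ≤ max ‖f‖ (ε + ‖g‖) := by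
  simpa [sub_eq_add_neg] using norm_add_le_max_of_abs_le_on_support (g := -g) (by simpa using h)

end ContinuousMap

open unitInterval

noncomputable def tent (m r : ℝ) : C(I, ℝ) :=
  ⟨fun t => max 0 (1 - |(t : ℝ) - m| / r), by fun_prop⟩

theorem tent_apply {m r : ℝ} (t : I) : tent m r t = max 0 (1 - |(t : ℝ) - m| / r) := rfl

theorem tent_apply_of_le {m r : ℝ} (hr : 0 < r) {t : I} (h : r ≤ |(t : ℝ) - m|) :
    tent m r t = 0 :=
  max_eq_left <| sub_nonpos.mpr <| (one_le_div hr).mpr h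

theorem norm_tent {m r : ℝ} (hr : 0 < r) (hm : m ∈ I) : ‖tent m r‖ = 1 := by
  refine le_antisymm ((ContinuousMap.norm_le _ zero_le_one).mpr fun t => ?_) ?_
  · rw [tent_apply, Real.norm_of_nonneg (le_max_left _ _)]
    exact max_le zero_le_one (sub_le_self _ (by positivity))
  · simpa [tent_apply] using (tent m r).norm_coe_le_norm ⟨m, hm⟩

theorem exists_norm_eq_one_support_subset_ball (t₀ : I) {δ : ℝ} (hδ : 0 < δ) :
    ∃ g : C(I, ℝ), g 0 = 0 ∧ g 1 = 0 ∧ ‖g‖ = 1 ∧ Function.support g ⊆ Metric.ball t₀ δ := by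
  obtain ⟨r, hr, hrδ, hr1⟩ : ∃ r : ℝ, 0 < r ∧ 2 * r ≤ δ ∧ 2 * r ≤ 1 :=
    ⟨min δ 1 / 2, by positivity, by linarith [min_le_left δ 1], by linarith [min_le_right δ 1]⟩
  -- centre the tent at the projection of `t₀` onto `[r, 1 - r]`, so that it vanishes at `0` and `1`
  obtain ⟨m, hrm, hm1, hmt⟩ : ∃ m : ℝ, r ≤ m ∧ m ≤ 1 - r ∧ |m - t₀| ≤ r := by
    refine ⟨max r (min t₀ (1 - r)), le_max_left _ _, max_le (by linarith) (min_le_right _ _), ?_⟩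
    rw [abs_le]
    constructor <;> rcases max_cases r (min (t₀ : ℝ) (1 - r)) with ⟨h, _⟩ | ⟨h, _⟩ <;>
      rcases min_cases (t₀ : ℝ) (1 - r) with ⟨h', _⟩ | ⟨h', _⟩ <;> linarith [t₀.2.1, t₀.2.2]
  refine ⟨tent m r, tent_apply_of_le hr ?_, tent_apply_of_le hr ?_,
    norm_tent hr ⟨by linarith, by linarith⟩, fun t ht => ?_⟩
  · simp [abs_of_pos (hr.trans_le hrm), hrm]
  · rw [Set.Icc.coe_one, abs_of_pos (show 0 < 1 - m by linarith)]; linarith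
  · have htm : |(t : ℝ) - m| < r := not_le.mp fun h => ht (tent_apply_of_le hr h)
    rw [Metric.mem_ball, Subtype.dist_eq, Real.dist_eq]
    calc |(t : ℝ) - t₀| ≤ |(t : ℝ) - m| + |m - t₀| := abs_sub_le _ _ _
      _ < δ := by linarith

theorem exists_eq_zero_of_mem_X01 {f : C(I, ℝ)} (hf : f ∈ X01) : ∃ t, f t = 0 := by
  change f 0 = -f 1 at hf
  rcases le_total (f 0) 0 with h | h
  · exact intermediate_value_univ 0 1 f.continuous ⟨h, by linarith⟩
  · exact intermediate_value_univ 1 0 f.continuous ⟨by linarith, h⟩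

theorem isLASQ_X01 : IsLASQ X01 := by
  rintro ⟨f, hfX⟩ hf ε hε
  rw [Submodule.coe_norm] at hf
  obtain ⟨t₀, ht₀⟩ := exists_eq_zero_of_mem_X01 hfX
  obtain ⟨δ, hδ, hfδ⟩ := Metric.continuous_iff.mp f.continuous t₀ ε hε
  obtain ⟨g, hg0, hg1, hg, hsupp⟩ := exists_norm_eq_one_support_subset_ball t₀ hδ
  have hsmall (t : I) (ht : g t ≠ 0) : |f t| ≤ ε := by
    simpa [ht₀, Real.dist_eq] using (hfδ t (hsupp ht)).le
  have hbound : max ‖f‖ (ε + ‖g‖) ≤ 1 + ε := by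
    rw [hf, hg]
    exact max_le (by linarith) (add_comm ε 1).le
  refine ⟨⟨g, show g 0 = -g 1 by simp [hg0, hg1]⟩, hg, ?_, ?_⟩
  · exact (ContinuousMap.norm_add_le_max_of_abs_le_on_support hsmall).trans hbound
  · exact (ContinuousMap.norm_sub_le_max_of_abs_le_on_support hsmall).trans hbound

def oneSubTwoMul : C(I, ℝ) :=
  ⟨fun t => 1 - 2 * (t : ℝ), by fun_prop⟩

theorem oneSubTwoMul_mem_X01 : oneSubTwoMul ∈ X01 :=
  show (1 : ℝ) - 2 * 0 = -(1 - 2 * 1) by norm_num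

theorem norm_oneSubTwoMul : ‖oneSubTwoMul‖ = 1 := by
  refine le_antisymm ((ContinuousMap.norm_le _ zero_le_one).mpr fun t => ?_) ?_
  · rw [Real.norm_eq_abs, abs_le]
    constructor <;> simp only [oneSubTwoMul, ContinuousMap.coe_mk] <;> linarith [t.2.1, t.2.2]
  · simpa [oneSubTwoMul] using oneSubTwoMul.norm_coe_le_norm 0

theorem tent_half_mem_X01 : tent (1 / 2) (1 / 2) ∈ X01 := by
  change tent _ _ 0 = -tent _ _ 1
  rw [tent_apply_of_le (by norm_num) (by norm_num), tent_apply_of_le (by norm_num) (by norm_num),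
    neg_zero]

theorem one_le_abs_oneSubTwoMul_add_abs_tent_half (t : I) :
    1 ≤ |oneSubTwoMul t| + |tent (1 / 2) (1 / 2) t| := by
  have h : |oneSubTwoMul t| = |(t : ℝ) - 1 / 2| / (1 / 2) := by
    change |1 - 2 * (t : ℝ)| = _
    rw [show 1 - 2 * (t : ℝ) = -2 * (t - 1 / 2) by ring, abs_mul, abs_neg, abs_two]
    ring
  calc 1 ≤ |oneSubTwoMul t| + tent (1 / 2) (1 / 2) t := by
        rw [h, tent_apply]; linarith [le_max_right 0 (1 - |(t : ℝ) - 1 / 2| / (1 / 2))]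
    _ ≤ |oneSubTwoMul t| + |tent (1 / 2) (1 / 2) t| := by gcongr; exact le_abs_self _

theorem not_isASQ_X01 : ¬IsASQ X01 := by
  classical
  intro hASQ
  set u : X01 := ⟨oneSubTwoMul, oneSubTwoMul_mem_X01⟩
  set v : X01 := ⟨tent (1 / 2) (1 / 2), tent_half_mem_X01⟩
  have hnorm : ∀ x ∈ ({u, v} : Finset X01), ‖x‖ = 1 := by
    simpa [u, v] using ⟨norm_oneSubTwoMul, norm_tent (by norm_num) (by norm_num)⟩
  obtain ⟨y, hy, hyuv⟩ := hASQ {u, v} hnorm (1 / 4) (by norm_num)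
  have : ‖(y : C(I, ℝ))‖ ≤ 1 + 1 / 4 - 1 / 2 :=
    ContinuousMap.norm_le_of_le_abs_add_abs one_le_abs_oneSubTwoMul_add_abs_tent_half
      (hyuv u (by simp)) (hyuv v (by simp))
  rw [← Submodule.coe_norm, hy] at this
  norm_num at this

theorem stmt_13 : IsLASQ X01 ∧ ¬ IsASQ X01 :=
  ⟨isLASQ_X01, not_isASQ_X01⟩
end

section
/- Let X be (L)ASQ and let Y be an almost isometric ideal in X. Then Y is (L)ASQ. -/
/-- `Y` is an almost isometric ideal (ai-ideal) in `X`: for every finite-dimensional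
subspace `E ⊆ X` and every `ε > 0` there is a linear `u : E → Y` fixing `E ∩ Y`
which is an `ε`-isometry. -/
def IsAiIdeal {X : Type*} [NormedAddCommGroup X] [NormedSpace ℝ X]
    (Y : Submodule ℝ X) : Prop :=
  ∀ E : Submodule ℝ X, FiniteDimensional ℝ E → ∀ ε : ℝ, 0 < ε →
    ∃ u : E →ₗ[ℝ] Y, (∀ e : E, (e : X) ∈ Y → ((u e : X) = (e : X))) ∧
      ∀ e : E, (1 + ε)⁻¹ * ‖(e : X)‖ ≤ ‖(u e : X)‖ ∧ ‖(u e : X)‖ ≤ (1 + ε) * ‖(e : X)‖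

/-!
Let `x₁, …, xₙ ∈ S_Y` and let `z ∈ S_X` witness almost squareness of `X` for them.
Applying the ai-ideal property to `span {z, x₁, …, xₙ}` gives a `(1 + δ)`-isometry into `Y`
that fixes the `xᵢ`; it sends `z` to an almost-unit vector `w ∈ Y` with
`‖xᵢ ± w‖ ≤ (1 + δ) ‖xᵢ ± z‖`, and normalising `w` costs at most `δ` more.
-/

lemma norm_inv_norm_smul_sub_self {E : Type*} [NormedAddCommGroup E] [NormedSpace ℝ E]
    {w : E} (hw : w ≠ 0) : ‖‖w‖⁻¹ • w - w‖ = |1 - ‖w‖| := by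
  have hw' : ‖w‖ ≠ 0 := norm_ne_zero_iff.mpr hw
  calc ‖‖w‖⁻¹ • w - w‖ = |‖w‖⁻¹ - 1| * ‖w‖ := by
        rw [← Real.norm_eq_abs, ← norm_smul, sub_smul, one_smul]
    _ = |1 - ‖w‖| := by
        rw [← abs_of_nonneg (norm_nonneg w), ← abs_mul, abs_norm, sub_mul,
          inv_mul_cancel₀ hw', one_mul]

lemma norm_inv_norm_smul_sub_self_le {E : Type*} [NormedAddCommGroup E] [NormedSpace ℝ E]
    {w : E} {δ : ℝ} (hδ : 0 < δ) (hlow : (1 + δ)⁻¹ ≤ ‖w‖) (hupp : ‖w‖ ≤ 1 + δ) :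
    ‖‖w‖⁻¹ • w - w‖ ≤ δ := by
  have hw : w ≠ 0 := norm_pos_iff.mp ((inv_pos.mpr (by linarith)).trans_le hlow)
  rw [norm_inv_norm_smul_sub_self hw, abs_le]
  have : 1 ≤ ‖w‖ * (1 + δ) := by rwa [inv_le_iff_one_le_mul₀ (by linarith)] at hlow
  constructor <;> nlinarith

namespace IsAiIdeal

variable {X : Type*} [NormedAddCommGroup X] [NormedSpace ℝ X] {Y : Submodule ℝ X}

lemma exists_almost_isometric_image (hY : IsAiIdeal Y) (S : Finset Y) (z : X) {δ : ℝ} (hδ : 0 < δ) :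
    ∃ w : Y, (1 + δ)⁻¹ * ‖z‖ ≤ ‖w‖ ∧ ‖w‖ ≤ (1 + δ) * ‖z‖ ∧
      ∀ x ∈ S, ‖x + w‖ ≤ (1 + δ) * ‖(x : X) + z‖ ∧ ‖x - w‖ ≤ (1 + δ) * ‖(x : X) - z‖ := by
  set E := Submodule.span ℝ (insert z ((↑) '' (S : Set Y)))
  have hE : FiniteDimensional ℝ E :=
    FiniteDimensional.span_of_finite ℝ ((S.finite_toSet.image _).insert z)
  obtain ⟨u, hfix, hbd⟩ := hY E hE δ hδ
  let ze : E := ⟨z, Submodule.subset_span (Set.mem_insert _ _)⟩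
  refine ⟨u ze, (hbd ze).1, (hbd ze).2, fun x hx => ?_⟩
  let xe : E := ⟨x, Submodule.subset_span (Set.mem_insert_of_mem _ ⟨x, hx, rfl⟩)⟩
  have hux : u xe = x := Subtype.ext (hfix xe x.2)
  constructor
  · simpa [hux] using (hbd (xe + ze)).2
  · simpa [hux] using (hbd (xe - ze)).2

lemma exists_sphere_of_forall_exists_sphere (hY : IsAiIdeal Y) (S : Finset Y)
    (hS : ∀ δ > 0, ∃ z : X, ‖z‖ = 1 ∧ ∀ x ∈ S, ‖(x : X) + z‖ ≤ 1 + δ ∧ ‖(x : X) - z‖ ≤ 1 + δ)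
    {ε : ℝ} (hε : 0 < ε) : ∃ y : Y, ‖y‖ = 1 ∧ ∀ x ∈ S, ‖x + y‖ ≤ 1 + ε ∧ ‖x - y‖ ≤ 1 + ε := by
  obtain ⟨δ, hδ, hδε⟩ : ∃ δ > 0, (1 + δ) * (1 + δ) + δ ≤ 1 + ε := by
    refine ⟨min ε 1 / 5, by positivity, ?_⟩
    have h₁ : min ε 1 ≤ ε := min_le_left ε 1
    have h₂ : min ε 1 ≤ 1 := min_le_right ε 1
    have h₀ : 0 < min ε 1 := lt_min hε one_pos
    nlinarith
  obtain ⟨z, hz, hzS⟩ := hS δ hδ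
  obtain ⟨w, hlow, hupp, hwS⟩ := hY.exists_almost_isometric_image S z hδ
  rw [hz, mul_one] at hlow hupp
  have hw : w ≠ 0 := norm_pos_iff.mp ((inv_pos.mpr (by linarith)).trans_le hlow)
  have hyw : ‖‖w‖⁻¹ • w - w‖ ≤ δ := norm_inv_norm_smul_sub_self_le hδ hlow hupp
  have hδ₁ : 0 ≤ 1 + δ := by linarith
  refine ⟨‖w‖⁻¹ • w, norm_smul_inv_norm hw, fun x hx => ⟨?_, ?_⟩⟩
  · calc ‖x + ‖w‖⁻¹ • w‖ = ‖(x + w) + (‖w‖⁻¹ • w - w)‖ := by congr 1; abel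
      _ ≤ (1 + δ) * (1 + δ) + δ := (norm_add_le _ _).trans <| add_le_add
          ((hwS x hx).1.trans (mul_le_mul_of_nonneg_left (hzS x hx).1 hδ₁)) hyw
      _ ≤ 1 + ε := hδε
  · calc ‖x - ‖w‖⁻¹ • w‖ = ‖(x - w) - (‖w‖⁻¹ • w - w)‖ := by congr 1; abel
      _ ≤ (1 + δ) * (1 + δ) + δ := (norm_sub_le _ _).trans <| add_le_add
          ((hwS x hx).2.trans (mul_le_mul_of_nonneg_left (hzS x hx).2 hδ₁)) hyw
      _ ≤ 1 + ε := hδε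

end IsAiIdeal

theorem stmt_14_general (X : Type*) [NormedAddCommGroup X] [NormedSpace ℝ X]
    (Y : Submodule ℝ X) (hY : IsAiIdeal Y) :
    (IsASQ X → IsASQ Y) ∧ (IsLASQ X → IsLASQ Y) := by
  classical
  refine ⟨fun hX S hS ε hε => hY.exists_sphere_of_forall_exists_sphere S (fun δ hδ => ?_) hε,
    fun hX x hx ε hε => ?_⟩
  · obtain ⟨z, hz, hzS⟩ := hX (S.image (↑)) (by simpa using hS) δ hδ
    exact ⟨z, hz, fun x hx => hzS x (Finset.mem_image_of_mem _ hx)⟩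
  · obtain ⟨y, hy, hyx⟩ := hY.exists_sphere_of_forall_exists_sphere {x}
      (fun δ hδ => by simpa using hX x hx δ hδ) hε
    exact ⟨y, hy, hyx x (Finset.mem_singleton_self x)⟩

theorem stmt_14 (X : Type*) [NormedAddCommGroup X] [NormedSpace ℝ X] [CompleteSpace X]
    (Y : Submodule ℝ X) (hY : IsAiIdeal Y) :
    (IsASQ X → IsASQ Y) ∧ (IsLASQ X → IsLASQ Y) :=
  stmt_14_general X Y hY
end

section
/- If X is an ASQ Banach space, then for every separable closed subspace Y of X there exists a separable closed subspace Z with Y ⊂ Z ⊂ X such that Z is ASQ. -/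
open Set TopologicalSpace Metric Submodule

section Witnesses

variable {X : Type*}

section Seminormed

variable [SeminormedAddCommGroup X]

def HasASQWitnesses (A T : Set X) : Prop :=
  ∀ F : Finset X, ↑F ⊆ A → ∀ ε : ℝ, 0 < ε →
    ∃ y ∈ T, ‖y‖ = 1 ∧ ∀ x ∈ F, ‖x + y‖ ≤ 1 + ε ∧ ‖x - y‖ ≤ 1 + ε

namespace HasASQWitnesses

variable {A A' T T' : Set X}

theorem mono (h : HasASQWitnesses A T) (hA : A' ⊆ A) (hT : T ⊆ T') :
    HasASQWitnesses A' T' := fun F hF ε hε =>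
  let ⟨y, hyT, hy⟩ := h F (hF.trans hA) ε hε
  ⟨y, hT hyT, hy⟩

theorem closure (h : HasASQWitnesses A T) : HasASQWitnesses (closure A) T := by
  classical
  intro F hF ε hε
  choose! a haA hax using fun x (hx : x ∈ F) =>
    Metric.mem_closure_iff.1 (hF hx) (ε / 2) (half_pos hε)
  obtain ⟨y, hyT, hy1, hy⟩ := h (F.image a)
    (by rw [Finset.coe_image, Set.image_subset_iff]; exact haA) (ε / 2) (half_pos hε)
  refine ⟨y, hyT, hy1, fun x hx => ?_⟩
  obtain ⟨hplus, hminus⟩ := hy (a x) (Finset.mem_image_of_mem a hx)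
  have hxa : ‖x - a x‖ < ε / 2 := by simpa [dist_eq_norm] using hax x hx
  have hplus' := norm_sub_norm_le (x + y) (a x + y)
  have hminus' := norm_sub_norm_le (x - y) (a x - y)
  rw [add_sub_add_right_eq_sub] at hplus'
  rw [sub_sub_sub_cancel_right] at hminus'
  constructor <;> linarith

theorem exists_countable (h : HasASQWitnesses A T) (hA : IsSeparable A) :
    ∃ T' ⊆ T, T'.Countable ∧ HasASQWitnesses A T' := by
  classical
  obtain ⟨D, hDA, hDc, hAD⟩ := hA.exists_countable_dense_subset
  have := hDc.to_subtype
  have hD (G : Finset D) (k : ℕ) : ∃ y ∈ T, ‖y‖ = 1 ∧ ∀ x ∈ G,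
      ‖(x : X) + y‖ ≤ 1 + 1 / (k + 1) ∧ ‖(x : X) - y‖ ≤ 1 + 1 / (k + 1) := by
    simpa using h (G.map (Function.Embedding.subtype _))
      (by simpa [Set.subset_def] using fun x hx _ => hDA hx) _ Nat.one_div_pos_of_nat
  choose y hyT hy using hD
  refine ⟨range (Function.uncurry y), range_subset_iff.2 fun p => hyT _ _, countable_range _,
    HasASQWitnesses.mono ?_ hAD subset_rfl⟩
  refine HasASQWitnesses.closure fun F hF ε hε => ?_
  obtain ⟨k, hk⟩ := exists_nat_one_div_lt hε
  refine ⟨y (F.subtype (· ∈ D)) k, ⟨(_, k), rfl⟩, hy _ _ |>.1, fun x hx => ?_⟩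
  obtain ⟨hplus, hminus⟩ := (hy _ _).2 ⟨x, hF hx⟩ (Finset.mem_subtype.2 hx)
  exact ⟨hplus.trans (add_le_add_right hk.le 1), hminus.trans (add_le_add_right hk.le 1)⟩

theorem iUnion {ι : Type*} [Nonempty ι] {A : ι → Set X} (hA : Directed (· ⊆ ·) A)
    (h : ∀ i, HasASQWitnesses (A i) T) : HasASQWitnesses (⋃ i, A i) T := fun F hF =>
  let ⟨i, hi⟩ := hA.exists_mem_subset_of_finset_subset_biUnion hF
  h i F hi

end HasASQWitnesses

end Seminormed

variable [NormedAddCommGroup X] [NormedSpace ℝ X]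

theorem sphere_inter_closure_subset (V : Submodule ℝ X) :
    sphere (0 : X) 1 ∩ closure V ⊆ closure (sphere 0 1 ∩ V) := by
  rintro x ⟨hx1, hxV⟩
  rw [mem_sphere_zero_iff_norm] at hx1
  have hx0 : x ≠ 0 := norm_ne_zero_iff.1 (by simp [hx1])
  set f : X → X := fun v => ‖v‖⁻¹ • v
  have hf : ContinuousAt f x :=
    (continuous_norm.continuousAt.inv₀ (norm_ne_zero_iff.2 hx0)).smul continuousAt_id
  have hfx : f x = x := by simp [f, hx1]
  have himage : f '' V ⊆ {0} ∪ (sphere 0 1 ∩ V) := by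
    rintro _ ⟨v, hv, rfl⟩
    rcases eq_or_ne v 0 with rfl | hv0
    · simp [f]
    · exact Or.inr ⟨by simp [f, norm_smul, hv0], V.smul_mem _ hv⟩
  have := closure_mono himage (hfx ▸ mem_closure_image hf hxV)
  rw [closure_union, closure_singleton] at this
  exact this.resolve_left hx0

theorem IsASQ.hasASQWitnesses (h : IsASQ X) : HasASQWitnesses (sphere (0 : X) 1) univ :=
  fun F hF ε hε =>
    let ⟨y, hy1, hy⟩ := h F (fun _ hx => mem_sphere_zero_iff_norm.1 (hF hx)) ε hε
    ⟨y, mem_univ y, hy1, hy⟩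

theorem isASQ_of_hasASQWitnesses (Z : Submodule ℝ X)
    (h : HasASQWitnesses (sphere (0 : X) 1 ∩ Z) Z) : IsASQ Z := by
  intro S hS ε hε
  have hS' : ↑(S.map (Function.Embedding.subtype _)) ⊆ sphere (0 : X) 1 ∩ Z := fun x hx => by
    obtain ⟨z, hz, rfl⟩ := Finset.mem_map.1 hx
    exact ⟨mem_sphere_zero_iff_norm.2 (hS z hz), z.2⟩
  obtain ⟨y, hyZ, hy1, hy⟩ := h _ hS' ε hε
  exact ⟨⟨y, hyZ⟩, hy1, fun x hx => hy x (Finset.mem_map_of_mem _ hx)⟩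

theorem IsASQ.exists_countable_chain (h : IsASQ X) {s : Set X} (hs : s.Countable) :
    ∃ C : ℕ → Set X, C 0 = s ∧ Monotone C ∧ (∀ n, (C n).Countable) ∧
      ∀ n, HasASQWitnesses (sphere 0 1 ∩ span ℝ (C n)) (C (n + 1)) := by
  have step (t : {t : Set X // t.Countable}) : ∃ t' : {t : Set X // t.Countable},
      t.1 ⊆ t'.1 ∧ HasASQWitnesses (sphere 0 1 ∩ span ℝ t.1) t'.1 := by
    obtain ⟨W, -, hWc, hW⟩ :=
      (h.hasASQWitnesses.mono inter_subset_left subset_rfl).exists_countable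
        ((t.2.isSeparable.span (R := ℝ)).mono inter_subset_right)
    exact ⟨⟨t.1 ∪ W, t.2.union hWc⟩, subset_union_left,
      hW.mono subset_rfl subset_union_right⟩
  choose next hsub hnext using step
  refine ⟨fun n => (next^[n] ⟨s, hs⟩).1, rfl, monotone_nat_of_le_succ fun n => ?_,
    fun n => (next^[n] _).2, fun n => ?_⟩
  · rw [Function.iterate_succ_apply']; exact hsub _
  · simp only [Function.iterate_succ_apply']; exact hnext _

theorem isASQ_topologicalClosure_span_iUnion {C : ℕ → Set X} (hC : Monotone C)
    (hCw : ∀ n, HasASQWitnesses (sphere 0 1 ∩ span ℝ (C n)) (C (n + 1))) :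
    IsASQ (span ℝ (⋃ n, C n)).topologicalClosure := by
  have hspan : Monotone fun n => span ℝ (C n) := fun _ _ hmn => span_mono (hC hmn)
  have hspheres : sphere 0 1 ∩ (span ℝ (⋃ n, C n) : Set X) =
      ⋃ n, sphere 0 1 ∩ span ℝ (C n) := by
    rw [span_iUnion, coe_iSup_of_directed _ hspan.directed_le, inter_iUnion]
  have hW : HasASQWitnesses (sphere 0 1 ∩ (span ℝ (⋃ n, C n) : Set X)) (⋃ n, C n) := by
    rw [hspheres]
    exact .iUnion (monotone_const.inter fun _ _ hmn => hspan hmn).directed_le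
      fun n => (hCw n).mono subset_rfl (subset_iUnion C (n + 1))
  exact isASQ_of_hasASQWitnesses _ <| hW.closure.mono (sphere_inter_closure_subset _)
    (subset_span.trans (le_topologicalClosure _))

end Witnesses

theorem stmt_19_general (X : Type*) [NormedAddCommGroup X] [NormedSpace ℝ X]
    (h : IsASQ X) (Y : Submodule ℝ X)
    (hYsep : TopologicalSpace.IsSeparable (Y : Set X)) :
    ∃ Z : Submodule ℝ X, IsClosed (Z : Set X) ∧
      TopologicalSpace.IsSeparable (Z : Set X) ∧ Y ≤ Z ∧ IsASQ Z := by
  obtain ⟨c, hcc, hYc⟩ := hYsep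
  obtain ⟨C, rfl, hC, hCc, hCw⟩ := h.exists_countable_chain hcc
  exact ⟨(span ℝ (⋃ n, C n)).topologicalClosure, isClosed_topologicalClosure _,
    ((countable_iUnion hCc).isSeparable.span (R := ℝ)).closure,
    fun y hy => closure_mono ((subset_iUnion C 0).trans subset_span) (hYc hy),
    isASQ_topologicalClosure_span_iUnion hC hCw⟩

theorem stmt_19 (X : Type*) [NormedAddCommGroup X] [NormedSpace ℝ X] [CompleteSpace X]
    (h : IsASQ X) (Y : Submodule ℝ X) (hYc : IsClosed (Y : Set X))
    (hYsep : TopologicalSpace.IsSeparable (Y : Set X)) :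
    ∃ Z : Submodule ℝ X, IsClosed (Z : Set X) ∧
      TopologicalSpace.IsSeparable (Z : Set X) ∧ Y ≤ Z ∧ IsASQ Z :=
  stmt_19_general X h Y hYsep
end
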